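/- Assume τ > 0 and β̄·ℓ† ≤ min{τ, γ̄} (sub-regime A-1). Then every Wardrop equilibrium satisfies σ*_pool ≤ σ†_pool and β̄·ℓ_δ(σ*) ≤ min{τ, γ̄}. -/

import Mathlib

open MeasureTheory Set

namespace HOT

inductive Action : Type
  | toll
  | pool
  | o
  deriving DecidableEq

instance : MeasurableSpace Action := ⊤

/-- The rectangle of preference parameters `[0,β̄] × [0,γ̄]`. -/
def Rbox (βb γb : ℝ) : Set (ℝ × ℝ) := Icc (0:ℝ) βb ×ˢ Icc (0:ℝ) γb

/-- The strategy distribution of a strategy profile `s`: the `f`-mass of agents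
in the rectangle choosing each action. -/
noncomputable def stratDist (βb γb : ℝ) (f : ℝ × ℝ → ℝ) (s : ℝ × ℝ → Action)
    (a : Action) : ℝ :=
  ∫ p in Rbox βb γb ∩ s ⁻¹' {a}, f p

/-- HOT-lane vehicle flow induced by a strategy distribution. -/
noncomputable def xh (A : ℕ) (D : ℝ) (σ : Action → ℝ) : ℝ :=
  (σ Action.toll + σ Action.pool / (A : ℝ)) * D

/-- Ordinary-lane vehicle flow induced by a strategy distribution. -/
noncomputable def xo (D : ℝ) (σ : Action → ℝ) : ℝ := σ Action.o * D

/-- Latency difference `ℓ_δ(σ) = ℓ_o(x_o(σ)) − ℓ_h(x_h(σ))`. -/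
noncomputable def ldiff (ℓo ℓh : ℝ → ℝ) (A : ℕ) (D : ℝ) (σ : Action → ℝ) : ℝ :=
  ℓo (xo D σ) - ℓh (xh A D σ)

/-- The cost of agent `(β,γ)` for each action, given a strategy distribution. -/
noncomputable def cost (ℓo ℓh : ℝ → ℝ) (A : ℕ) (D τ : ℝ) (σ : Action → ℝ)
    (β γ : ℝ) : Action → ℝ
  | Action.toll => β * ℓh (xh A D σ) + τ
  | Action.pool => β * ℓh (xh A D σ) + γ
  | Action.o => β * ℓo (xo D σ)

/-- Wardrop equilibrium: every agent's action minimizes its own cost. -/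
def IsWardrop (ℓo ℓh : ℝ → ℝ) (A : ℕ) (D τ βb γb : ℝ) (f : ℝ × ℝ → ℝ)
    (s : ℝ × ℝ → Action) : Prop :=
  Measurable s ∧
  ∀ p ∈ Rbox βb γb, ∀ a : Action,
    cost ℓo ℓh A D τ (stratDist βb γb f s) p.1 p.2 (s p) ≤
      cost ℓo ℓh A D τ (stratDist βb γb f s) p.1 p.2 a

/-- Threshold carpool share `σ†_pool = ∫₀^β̄ ∫₀^{min(τ,γ̄)·β/β̄} f`. -/
noncomputable def sigmaDagger (βb γb τ : ℝ) (f : ℝ × ℝ → ℝ) : ℝ :=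
  ∫ β in (0:ℝ)..βb, ∫ γ in (0:ℝ)..(min τ γb * β / βb), f (β, γ)

/-- Threshold latency difference `ℓ† = ℓ_o((1−σ†)·D) − ℓ_h((σ†/A)·D)`. -/
noncomputable def ellDagger (ℓo ℓh : ℝ → ℝ) (A : ℕ) (D βb γb τ : ℝ)
    (f : ℝ × ℝ → ℝ) : ℝ :=
  ℓo ((1 - sigmaDagger βb γb τ f) * D) - ℓh (sigmaDagger βb γb τ f / (A : ℝ) * D)

/-- Regime-B toll share as a function of the latency difference `δ`. -/
noncomputable def gB (τ βb γb : ℝ) (f : ℝ × ℝ → ℝ) (δ : ℝ) : ℝ :=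
  ∫ γ in τ..γb, ∫ β in (τ / δ)..βb, f (β, γ)

/-- Regime-B carpool share as a function of the latency difference `δ`. -/
noncomputable def hB (τ βb : ℝ) (f : ℝ × ℝ → ℝ) (δ : ℝ) : ℝ :=
  ∫ γ in (0:ℝ)..τ, ∫ β in (γ / δ)..βb, f (β, γ)

end HOT

/-!
Let `δ = ℓ_δ(σ*)` and `c = min(τ, γ̄)/β̄`, so that `σ†_pool` is the `f`-mass of the part of `R`
below the line `γ = cβ`. Comparing costs, a carpooler `(β, γ)` has `γ ≤ βδ` and an agent on the
ordinary lane has `βδ ≤ γ`. If `δ > c`, the ordinary-lane agents lie on or above the line (which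
is null), so `σ*_o ≤ 1 - σ†_pool` and the HOT lane carries at least `σ†_pool·D/A`; monotonicity of
the latencies then gives `δ ≤ ℓ†`, contradicting `β̄·ℓ† ≤ min(τ, γ̄)`. Hence `δ ≤ c`, every
carpooler lies below the line, and `σ*_pool ≤ σ†_pool`.
-/

namespace HOT

theorem volume_setOf_snd_eq_mul_fst (c : ℝ) :
    volume {p : ℝ × ℝ | p.2 = c * p.1} = 0 := by
  have hm : MeasurableSet {p : ℝ × ℝ | p.2 = c * p.1} :=
    measurableSet_eq_fun measurable_snd (measurable_fst.const_mul c)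
  rw [Measure.volume_eq_prod, Measure.prod_apply hm]
  have hfiber (x : ℝ) : Prod.mk x ⁻¹' {p : ℝ × ℝ | p.2 = c * p.1} = {c * x} := by
    ext; simp
  simp [hfiber]

theorem setOf_snd_lt_mul_fst_ae_eq (c : ℝ) :
    {p : ℝ × ℝ | p.2 < c * p.1} =ᵐ[volume] {p : ℝ × ℝ | p.2 ≤ c * p.1} := by
  refine ae_eq_set.2 ⟨?_, ?_⟩
  · exact measure_mono_null (fun p (hp : p.2 < c * p.1 ∧ ¬p.2 ≤ c * p.1) => hp.2 hp.1.le)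
      measure_empty
  · exact measure_mono_null (fun p ⟨hle, hnlt⟩ => le_antisymm hle (not_lt.1 hnlt))
      (volume_setOf_snd_eq_mul_fst c)

theorem setIntegral_rbox_inter_snd_le_mul_fst {βb γb c : ℝ} {f : ℝ × ℝ → ℝ}
    (hβb : 0 ≤ βb) (hc : 0 ≤ c) (hcγ : c * βb ≤ γb) (hf : IntegrableOn f (Rbox βb γb)) :
    ∫ p in Rbox βb γb ∩ {p | p.2 ≤ c * p.1}, f p =
      ∫ β in 0..βb, ∫ γ in 0..c * β, f (β, γ) := by
  have hmeas : MeasurableSet {p : ℝ × ℝ | p.2 ≤ c * p.1} :=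
    measurableSet_le measurable_snd (measurable_fst.const_mul c)
  rw [← setIntegral_indicator hmeas, Rbox, Measure.volume_eq_prod, setIntegral_prod,
    intervalIntegral.integral_of_le hβb, ← integral_Icc_eq_integral_Ioc]
  · refine setIntegral_congr_fun measurableSet_Icc fun β hβ => ?_
    have hcβ : c * β ≤ γb := (mul_le_mul_of_nonneg_left hβ.2 hc).trans hcγ
    have hfiber : Icc 0 γb ∩ Iic (c * β) = Icc 0 (c * β) := by
      ext γ
      simp only [mem_inter_iff, mem_Icc, mem_Iic]
      exact ⟨fun h => ⟨h.1.1, h.2⟩, fun h => ⟨⟨h.1, h.2.trans hcβ⟩, h.2⟩⟩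
    change ∫ γ in Icc 0 γb, (Iic (c * β)).indicator (fun γ => f (β, γ)) γ = _
    rw [setIntegral_indicator measurableSet_Iic, hfiber, integral_Icc_eq_integral_Ioc,
      ← intervalIntegral.integral_of_le (mul_nonneg hc hβ.1)]
  · rw [← Measure.volume_eq_prod]
    exact hf.indicator hmeas

theorem sigmaDagger_eq_setIntegral {βb γb τ : ℝ} {f : ℝ × ℝ → ℝ} (hβb : 0 < βb) (hτ : 0 ≤ τ)
    (hγb : 0 ≤ γb) (hf : IntegrableOn f (Rbox βb γb)) :
    sigmaDagger βb γb τ f = ∫ p in Rbox βb γb ∩ {p | p.2 ≤ min τ γb / βb * p.1}, f p := by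
  have hcγ : min τ γb / βb * βb ≤ γb := by
    rw [div_mul_cancel₀ _ hβb.ne']
    exact min_le_right _ _
  rw [setIntegral_rbox_inter_snd_le_mul_fst hβb.le (by positivity) hcγ hf, sigmaDagger]
  simp_rw [mul_div_right_comm]

theorem measurableSet_rbox (βb γb : ℝ) : MeasurableSet (Rbox βb γb) :=
  measurableSet_Icc.prod measurableSet_Icc

section StrategyDistribution

variable {βb γb : ℝ} {f : ℝ × ℝ → ℝ} {s : ℝ × ℝ → Action}

theorem measurableSet_rbox_inter_preimage (hs : Measurable s) (a : Action) :
    MeasurableSet (Rbox βb γb ∩ s ⁻¹' {a}) :=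
  (measurableSet_rbox βb γb).inter (hs MeasurableSpace.measurableSet_top)

theorem stratDist_nonneg (hf : ∀ p ∈ Rbox βb γb, 0 ≤ f p) (hs : Measurable s) (a : Action) :
    0 ≤ stratDist βb γb f s a :=
  setIntegral_nonneg (measurableSet_rbox_inter_preimage hs a) fun p hp => hf p hp.1

theorem stratDist_toll_add_pool_add_o (hf : IntegrableOn f (Rbox βb γb)) (hs : Measurable s) :
    stratDist βb γb f s .toll + stratDist βb γb f s .pool + stratDist βb γb f s .o =
      ∫ p in Rbox βb γb, f p := by
  set region : Action → Set (ℝ × ℝ) := fun a => Rbox βb γb ∩ s ⁻¹' {a}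
  have hcover : Rbox βb γb = (region .toll ∪ region .pool) ∪ region .o := by
    ext p
    cases hp : s p <;> simp [region, hp]
  have hdisj {a b : Action} (hab : a ≠ b) : Disjoint (region a) (region b) :=
    ((disjoint_singleton.2 hab).preimage s).mono inter_subset_right inter_subset_right
  have hint (a : Action) : IntegrableOn f (region a) := hf.mono_set inter_subset_left
  have hmeas (a : Action) : MeasurableSet (region a) := measurableSet_rbox_inter_preimage hs a
  conv_rhs => rw [hcover]
  rw [setIntegral_union ((hdisj (by decide)).union_left (hdisj (by decide))) (hmeas _)
      ((hint _).union (hint _)) (hint _),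
    setIntegral_union (hdisj (by decide)) (hmeas _) (hint _) (hint _)]
  rfl

variable {ℓo ℓh : ℝ → ℝ} {A : ℕ} {D τ : ℝ}

theorem IsWardrop.snd_le_fst_mul_ldiff_of_pool (hs : IsWardrop ℓo ℓh A D τ βb γb f s)
    {p : ℝ × ℝ} (hp : p ∈ Rbox βb γb) (hsp : s p = .pool) :
    p.2 ≤ p.1 * ldiff ℓo ℓh A D (stratDist βb γb f s) := by
  have h := hs.2 p hp .o
  rw [hsp] at h
  simp only [cost] at h
  rw [ldiff, mul_sub]
  linarith

theorem IsWardrop.fst_mul_ldiff_le_snd_of_o (hs : IsWardrop ℓo ℓh A D τ βb γb f s)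
    {p : ℝ × ℝ} (hp : p ∈ Rbox βb γb) (hsp : s p = .o) :
    p.1 * ldiff ℓo ℓh A D (stratDist βb γb f s) ≤ p.2 := by
  have h := hs.2 p hp .pool
  rw [hsp] at h
  simp only [cost] at h
  rw [ldiff, mul_sub]
  linarith

theorem IsWardrop.stratDist_pool_le (hs : IsWardrop ℓo ℓh A D τ βb γb f s)
    (hf : IntegrableOn f (Rbox βb γb)) (hf0 : ∀ p ∈ Rbox βb γb, 0 ≤ f p) {c : ℝ}
    (hc : ldiff ℓo ℓh A D (stratDist βb γb f s) ≤ c) :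
    stratDist βb γb f s .pool ≤ ∫ p in Rbox βb γb ∩ {p | p.2 ≤ c * p.1}, f p := by
  have hmeas : MeasurableSet (Rbox βb γb ∩ {p : ℝ × ℝ | p.2 ≤ c * p.1}) :=
    (measurableSet_rbox βb γb).inter (measurableSet_le measurable_snd (measurable_fst.const_mul c))
  refine setIntegral_mono_set (hf.mono_set inter_subset_left)
    (ae_restrict_of_forall_mem hmeas fun p hp => hf0 p hp.1) (LE.le.eventuallyLE ?_)
  rintro p ⟨hp, hsp⟩
  refine ⟨hp, (hs.snd_le_fst_mul_ldiff_of_pool hp hsp).trans ?_⟩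
  rw [mul_comm c]
  exact mul_le_mul_of_nonneg_left hc hp.1.1

theorem IsWardrop.stratDist_o_add_le (hs : IsWardrop ℓo ℓh A D τ βb γb f s)
    (hf : IntegrableOn f (Rbox βb γb)) (hf0 : ∀ p ∈ Rbox βb γb, 0 ≤ f p) {c : ℝ}
    (hc : c ≤ ldiff ℓo ℓh A D (stratDist βb γb f s)) :
    stratDist βb γb f s .o + ∫ p in Rbox βb γb ∩ {p | p.2 < c * p.1}, f p ≤
      ∫ p in Rbox βb γb, f p := by
  have hdisj : Disjoint (Rbox βb γb ∩ s ⁻¹' {.o}) (Rbox βb γb ∩ {p | p.2 < c * p.1}) := by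
    refine disjoint_left.2 fun p ⟨hp, hsp⟩ hq => (show p.2 < c * p.1 from hq.2).not_ge ?_
    rw [mul_comm c]
    exact (mul_le_mul_of_nonneg_left hc hp.1.1).trans (hs.fst_mul_ldiff_le_snd_of_o hp hsp)
  rw [stratDist, ← setIntegral_union hdisj
    ((measurableSet_rbox βb γb).inter (measurableSet_lt measurable_snd
      (measurable_fst.const_mul c)))
    (hf.mono_set inter_subset_left) (hf.mono_set inter_subset_left)]
  exact setIntegral_mono_set hf (ae_restrict_of_forall_mem (measurableSet_rbox βb γb) hf0)
    (LE.le.eventuallyLE (union_subset inter_subset_left inter_subset_left))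

end StrategyDistribution

theorem ldiff_le_of_stratDist_o_le {ℓo ℓh : ℝ → ℝ} (hom : MonotoneOn ℓo (Ici 0))
    (hhm : MonotoneOn ℓh (Ici 0)) {A : ℕ} (hA : 1 ≤ A) {D : ℝ} (hD : 0 ≤ D)
    {σ : Action → ℝ} (hσ : ∀ a, 0 ≤ σ a) (hsum : σ .toll + σ .pool + σ .o = 1)
    {x : ℝ} (hx : 0 ≤ x) (hox : σ .o ≤ 1 - x) :
    ldiff ℓo ℓh A D σ ≤ ℓo ((1 - x) * D) - ℓh (x / A * D) := by
  have hA : (1 : ℝ) ≤ A := by exact_mod_cast hA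
  have hxo : xo D σ ≤ (1 - x) * D := mul_le_mul_of_nonneg_right hox hD
  have hxh : x / A * D ≤ xh A D σ := by
    refine mul_le_mul_of_nonneg_right ?_ hD
    calc x / A ≤ (σ .toll + σ .pool) / A := by gcongr; linarith
      _ ≤ σ .toll + σ .pool / A := by
        rw [add_div]; gcongr; exact div_le_self (hσ _) hA
  have hxo0 : 0 ≤ xo D σ := mul_nonneg (hσ .o) hD
  have hxh0 : 0 ≤ x / A * D := by positivity
  have hlo : ℓo (xo D σ) ≤ ℓo ((1 - x) * D) := hom hxo0 (hxo0.trans hxo) hxo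
  have hlh := hhm hxh0 (hxh0.trans hxh) hxh
  rw [ldiff]
  linarith

end HOT

open HOT

theorem stmt8_general
    (ℓo ℓh : ℝ → ℝ) (A : ℕ) (D τ βb γb : ℝ) (f : ℝ × ℝ → ℝ)
    (hD : 0 < D) (hA : 2 ≤ A) (hβb : 0 < βb) (hγb : 0 < γb)
    (hom : StrictMonoOn ℓo (Ici 0))
    (hhm : StrictMonoOn ℓh (Ici 0))
    (hfc : ContinuousOn f (Rbox βb γb)) (hfpos : ∀ p ∈ Rbox βb γb, 0 < f p)
    (hfint : (∫ p in Rbox βb γb, f p) = 1)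
    (hτ : 0 < τ)
    (hreg : βb * ellDagger ℓo ℓh A D βb γb τ f ≤ min τ γb)
    (s : ℝ × ℝ → Action) (hs : IsWardrop ℓo ℓh A D τ βb γb f s) :
    stratDist βb γb f s Action.pool ≤ sigmaDagger βb γb τ f ∧
    βb * ldiff ℓo ℓh A D (stratDist βb γb f s) ≤ min τ γb := by
  have hf : IntegrableOn f (Rbox βb γb) :=
    hfc.integrableOn_compact (isCompact_Icc.prod isCompact_Icc)
  have hf0 (p) (hp : p ∈ Rbox βb γb) : 0 ≤ f p := (hfpos p hp).le
  set c := min τ γb / βb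
  have hσ_le : sigmaDagger βb γb τ f = ∫ p in Rbox βb γb ∩ {p | p.2 ≤ c * p.1}, f p :=
    sigmaDagger_eq_setIntegral hβb hτ.le hγb.le hf
  have hσ_lt : sigmaDagger βb γb τ f = ∫ p in Rbox βb γb ∩ {p | p.2 < c * p.1}, f p :=
    hσ_le.trans (setIntegral_congr_set ((ae_eq_refl _).inter (setOf_snd_lt_mul_fst_ae_eq c))).symm
  have hσ0 : 0 ≤ sigmaDagger βb γb τ f := by
    rw [hσ_le]
    exact setIntegral_nonneg ((measurableSet_rbox βb γb).inter
      (measurableSet_le measurable_snd (measurable_fst.const_mul c))) fun p hp => hf0 p hp.1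
  have hldiff : βb * ldiff ℓo ℓh A D (stratDist βb γb f s) ≤ min τ γb := by
    by_contra! hlt
    have ho := hs.stratDist_o_add_le hf hf0 (c := c) (by rw [div_le_iff₀' hβb]; exact hlt.le)
    have hsum := stratDist_toll_add_pool_add_o hf hs.1
    rw [← hσ_lt, hfint] at ho
    rw [hfint] at hsum
    have hδ := ldiff_le_of_stratDist_o_le hom.monotoneOn hhm.monotoneOn (one_le_two.trans hA)
      hD.le (stratDist_nonneg hf0 hs.1) hsum hσ0 (by linarith)
    exact hlt.not_ge ((mul_le_mul_of_nonneg_left hδ hβb.le).trans hreg)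
  refine ⟨hσ_le ▸ hs.stratDist_pool_le hf hf0 ?_, hldiff⟩
  rwa [le_div_iff₀' hβb]

/-- in sub-regime A-1, every equilibrium satisfies
σ*_pool ≤ σ†_pool and β̄·ℓ_δ(σ*) ≤ min{τ, γ̄}. -/
theorem stmt8
    (ℓo ℓh : ℝ → ℝ) (A : ℕ) (D τ βb γb : ℝ) (f : ℝ × ℝ → ℝ)
    (hD : 0 < D) (hA : 2 ≤ A) (hβb : 0 < βb) (hγb : 0 < γb)
    (hoc : ContinuousOn ℓo (Ici 0)) (hom : StrictMonoOn ℓo (Ici 0))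
    (hhc : ContinuousOn ℓh (Ici 0)) (hhm : StrictMonoOn ℓh (Ici 0))
    (hfree : ℓo 0 = ℓh 0)
    (hfc : ContinuousOn f (Rbox βb γb)) (hfpos : ∀ p ∈ Rbox βb γb, 0 < f p)
    (hfint : (∫ p in Rbox βb γb, f p) = 1)
    (hτ : 0 < τ)
    (hreg : βb * ellDagger ℓo ℓh A D βb γb τ f ≤ min τ γb)
    (s : ℝ × ℝ → Action) (hs : IsWardrop ℓo ℓh A D τ βb γb f s) :
    stratDist βb γb f s Action.pool ≤ sigmaDagger βb γb τ f ∧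
    βb * ldiff ℓo ℓh A D (stratDist βb γb f s) ≤ min τ γb :=
  stmt8_general ℓo ℓh A D τ βb γb f hD hA hβb hγb hom hhm hfc hfpos hfint hτ hreg s hs
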